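/- arXiv:2605.27092 — 2 statements merged into one kernel-verified Lean document; each statement's English description precedes it below -/
import Mathlib

section
/- Every morphism of comonads φ : (G ×̃ −) → (L × −) on the category of G-sets is of the form φ_X(g, x) = (g·f(x), g·x) for some function f : X → L (depending naturally on X via a single map determined on components), and conversely for any set map f : X → L the formula φ_X(g,x) = (g·f(x), g·x) defines a G-equivariant map satisfying the counit compatibility ε_X ∘ φ_X = ε̃_X, i.e. the X-component is g·x. -/
/-- every morphism of comonads `φ : (G ×̃ −) → (L × −)` (i.e. a
G-equivariant map `G × X → L × X` compatible with the counits, where `G` acts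
on `G × X` by `a•(g,x) = (a*g, x)` and on `L × X` diagonally) is of the form
`φ(g,x) = (g • f(x), g • x)` for some `f : X → L`; conversely each such formula
defines a G-equivariant map whose `X`-component is `g • x`. -/
theorem stmt15 (G L X : Type*) [Group G] [MulAction G L] [MulAction G X] :
    (∀ φ : G × X → L × X,
      (∀ (a g : G) (x : X),
        φ (a * g, x) = (a • (φ (g, x)).1, a • (φ (g, x)).2)) →
      (∀ (g : G) (x : X), (φ (g, x)).2 = g • x) →
      ∃ f : X → L, ∀ (g : G) (x : X), φ (g, x) = (g • f x, g • x))
    ∧ (∀ f : X → L,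
      (∀ (a g : G) (x : X),
        (fun p : G × X => ((p.1 • f p.2, p.1 • p.2) : L × X)) (a * g, x)
          = (a • ((fun p : G × X => ((p.1 • f p.2, p.1 • p.2) : L × X)) (g, x)).1,
             a • ((fun p : G × X => ((p.1 • f p.2, p.1 • p.2) : L × X)) (g, x)).2))
      ∧ (∀ (g : G) (x : X),
          ((fun p : G × X => ((p.1 • f p.2, p.1 • p.2) : L × X)) (g, x)).2 = g • x)) := by
  constructor
  · intro φ hequiv hcounit
    refine ⟨fun x => (φ (1, x)).1, fun g x => ?_⟩
    have := hequiv g 1 x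
    simp only [mul_one] at this
    rw [this]
    ext
    · rfl
    · simp [hcounit]
  · intro f
    refine ⟨fun a g x => ?_, fun g x => rfl⟩
    simp [mul_smul]
end

section
/- Let N be a G-set, f : N → L a map, h : L → G with h(g·l) = g h(l), and set α(w) = (h(f(w)))⁻¹ ∈ G. Suppose α(w)·w = w for all w ∈ N (i.e. α(w) ∈ Stab(w)) and α(g·w) = g α(w) g⁻¹ for all g ∈ G, w ∈ N. Then for every n ≥ 1, the operator t_n on G^n × N defined (after the identification [*, g₁,…,g_{n+1}, w] ↔ (g₂,…,g_{n+1}, w) with g₁ = 1) by the cyclic formula t_n(g₁,…,g_{n+1},w) = (h(u), h(u)⁻¹·(g₁,…,g_n), g_{n+1}·w) with u = g₁⋯g_{n+1}·f(w), satisfies t_n^{n+1} = id. Conversely, if t₁² = id (on orbit classes, with L faithful), then α(w) ∈ Stab(w) and α(g·w) = g α(w) g⁻¹. -/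
/-!
Append to `(a₁, …, a_{m+1}, w)` the entry `b = h(a₁⋯a_{m+1} • f w)⁻¹` that `t_m` puts in front.
When `α(g • w) = g α(w) g⁻¹`, this lift turns `t_m` into the cyclic rotation of the `m + 2`
entries that also moves `w` by the entry arriving in front. After `m + 2` rotations the tuple
is back in place and `w` has been moved by `b a₁ ⋯ a_{m+1} = α(w)`, which fixes `w`.
The converse is a direct computation of `t₀²` on `(g, w)`.
-/

/-- The induced cyclic operator on `G^{m+1} × N` (the orbit classes of the
`(m+1)`-simplices under the identification `[*, g₁, …, g_{m+2}, w] ↦ (g₂, …, g_{m+2}, w)`):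
`(a₁, …, a_{m+1}, w) ↦ ((h((a₁⋯a_{m+1}) • f w))⁻¹, a₁, …, a_m, a_{m+1} • w)`. -/
def cyclicT (G N L : Type*) [Group G] [MulAction G L] [MulAction G N]
    (h : L → G) (f : N → L) (m : ℕ) :
    ((Fin (m + 1) → G) × N) → ((Fin (m + 1) → G) × N) :=
  fun p =>
    (Fin.cons (h ((List.ofFn p.1).prod • f p.2))⁻¹ (Fin.init p.1),
     p.1 (Fin.last m) • p.2)

open Function Fin.NatCast

lemma Fin.last_sub_natCast {n k : ℕ} (hk : k ≤ n) :
    (Fin.last n - k : Fin (n + 1)) = ⟨n - k, by omega⟩ := by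
  ext
  simp [Fin.last_sub, Nat.mod_eq_of_lt (Nat.lt_succ_of_le hk)]

lemma Fin.succ_sub_one {n : ℕ} (i : Fin (n + 1)) : i.succ - 1 = i.castSucc := by
  ext
  simp [Fin.coe_sub_one]

lemma Fin.zero_sub_one {n : ℕ} : (0 : Fin (n + 1)) - 1 = Fin.last n := by
  ext
  simp

lemma List.prod_ofFn_eq_prod_ofFn_init_mul {M : Type*} [Monoid M] {m : ℕ} (a : Fin (m + 1) → M) :
    (List.ofFn a).prod = (List.ofFn (Fin.init a)).prod * a (Fin.last m) := by
  rw [List.ofFn_succ', List.prod_concat]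
  rfl

section RotateSmul

variable {G N : Type*} [Group G] [MulAction G N] {n : ℕ}

def rotateSmul (p : (Fin (n + 1) → G) × N) : (Fin (n + 1) → G) × N :=
  (fun i => p.1 (i - 1), p.1 (Fin.last n) • p.2)

lemma rotateSmul_iterate {k : ℕ} (hk : k ≤ n + 1) (v : Fin (n + 1) → G) (w : N) :
    rotateSmul^[k] (v, w) =
      (fun i => v (i - k), ((List.ofFn v).drop (n + 1 - k)).prod • w) := by
  induction k with
  | zero => simp [List.drop_of_length_le]
  | succ k ih =>
    rw [iterate_succ_apply', ih (by omega), rotateSmul]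
    have hlen : n - k < (List.ofFn v).length := by simp
    rw [show n + 1 - (k + 1) = n - k by omega, List.drop_eq_getElem_cons hlen,
      show n + 1 - k = n - k + 1 by omega]
    simp only [Nat.cast_succ, sub_sub, add_comm (1 : Fin (n + 1)), smul_smul, List.prod_cons,
      List.getElem_ofFn, Fin.last_sub_natCast (show k ≤ n by omega)]

lemma rotateSmul_iterate_self (v : Fin (n + 1) → G) (w : N) :
    rotateSmul^[n + 1] (v, w) = (v, (List.ofFn v).prod • w) := by
  simp [rotateSmul_iterate le_rfl]

end RotateSmul

section CyclicT

variable {G N L : Type*} [Group G] [MulAction G L] (h : L → G) (f : N → L)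

def cyclicLift (m : ℕ) (p : (Fin (m + 1) → G) × N) : (Fin (m + 2) → G) × N :=
  (Fin.cons (h ((List.ofFn p.1).prod • f p.2))⁻¹ p.1, p.2)

lemma cyclicLift_injective (m : ℕ) : Injective (cyclicLift h f m) := by
  rintro ⟨a, w⟩ ⟨b, x⟩ hab
  simp only [cyclicLift, Prod.mk.injEq] at hab
  rw [← Fin.tail_cons (α := fun _ => G) _ a, hab.1, Fin.tail_cons, hab.2]

variable {h}

lemma prod_cyclicLift (hh : ∀ (g : G) (l : L), h (g • l) = g * h l) (m : ℕ)
    (p : (Fin (m + 1) → G) × N) : (List.ofFn (cyclicLift h f m p).1).prod = (h (f p.2))⁻¹ := by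
  rw [cyclicLift, List.ofFn_succ, List.prod_cons]
  simp only [Fin.cons_zero, Fin.cons_succ, List.ofFn_eq_map, hh, mul_inv_rev, inv_mul_cancel_right]

variable [MulAction G N]

lemma semiconj_cyclicLift (hh : ∀ (g : G) (l : L), h (g • l) = g * h l)
    (hconj : ∀ (g : G) (w : N), (h (f (g • w)))⁻¹ = g * (h (f w))⁻¹ * g⁻¹) (m : ℕ) :
    Semiconj (cyclicLift h f m) (cyclicT G N L h f m) rotateSmul := by
  rintro ⟨a, w⟩
  have hfront : (h ((List.ofFn (Fin.cons (h ((List.ofFn a).prod • f w))⁻¹ (Fin.init a) :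
      Fin (m + 1) → G)).prod • f (a (Fin.last m) • w)))⁻¹ = a (Fin.last m) := by
    rw [List.ofFn_succ, List.prod_cons]
    simp only [Fin.cons_zero, Fin.cons_succ, hh, mul_inv_rev, inv_inv]
    rw [hconj, List.prod_ofFn_eq_prod_ofFn_init_mul a]
    group
  simp only [cyclicLift, cyclicT, rotateSmul]
  refine Prod.ext (funext fun i => ?_) ?_
  · cases i using Fin.cases with
    | zero => simp only [Fin.cons_zero, Fin.zero_sub_one, Fin.cons_last]; exact hfront
    | succ j =>
      cases j using Fin.cases with
      | zero => simp
      | succ k => simp [Fin.succ_sub_one, Fin.init]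
  · simp

theorem cyclicT_iterate_eq_id (hh : ∀ (g : G) (l : L), h (g • l) = g * h l)
    (hstab : ∀ w : N, (h (f w))⁻¹ • w = w)
    (hconj : ∀ (g : G) (w : N), (h (f (g • w)))⁻¹ = g * (h (f w))⁻¹ * g⁻¹) (m : ℕ) :
    (cyclicT G N L h f m)^[m + 2] = id := by
  funext p
  obtain ⟨a, w⟩ := p
  apply cyclicLift_injective h f m
  rw [(semiconj_cyclicLift f hh hconj m).iterate_right (m + 2) (a, w), id]
  change rotateSmul^[m + 1 + 1] ((cyclicLift h f m (a, w)).1, w) = _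
  rw [rotateSmul_iterate_self, prod_cyclicLift f hh, hstab]
  rfl

lemma cyclicT_zero_apply (hh : ∀ (g : G) (l : L), h (g • l) = g * h l) (a : Fin 1 → G) (w : N) :
    cyclicT G N L h f 0 (a, w) = (fun _ => (h (f w))⁻¹ * (a 0)⁻¹, a 0 • w) := by
  refine Prod.ext (funext fun i => ?_) rfl
  simp [cyclicT, hh, Fin.fin_one_eq_zero i]

theorem stab_and_conj_of_cyclicT_zero_iterate_two (hh : ∀ (g : G) (l : L), h (g • l) = g * h l)
    (hcyc : (cyclicT G N L h f 0)^[2] = id) :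
    (∀ w : N, (h (f w))⁻¹ • w = w) ∧
      ∀ (g : G) (w : N), (h (f (g • w)))⁻¹ = g * (h (f w))⁻¹ * g⁻¹ := by
  have key (g : G) (w : N) := congrFun hcyc (fun _ => g, w)
  simp only [iterate_succ, iterate_zero, comp_apply, id_eq, cyclicT_zero_apply f hh,
    Prod.mk.injEq, funext_iff] at key
  refine ⟨fun w => by simpa using (key 1 w).2, fun g w => ?_⟩
  rw [mul_assoc, ← mul_inv_eq_iff_eq_mul]
  exact (key g w).1 0

end CyclicT

theorem stmt17_general (G N L : Type*) [Group G] [MulAction G L] [MulAction G N]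
    (h : L → G) (hh : ∀ (g : G) (l : L), h (g • l) = g * h l) (f : N → L) :
    (((∀ w : N, (h (f w))⁻¹ • w = w)
        ∧ (∀ (g : G) (w : N), (h (f (g • w)))⁻¹ = g * (h (f w))⁻¹ * g⁻¹)) →
      ∀ m : ℕ, (cyclicT G N L h f m)^[m + 2] = id)
    ∧ ((cyclicT G N L h f 0)^[2] = id →
      (∀ w : N, (h (f w))⁻¹ • w = w)
        ∧ (∀ (g : G) (w : N), (h (f (g • w)))⁻¹ = g * (h (f w))⁻¹ * g⁻¹)) :=
  ⟨fun ⟨hstab, hconj⟩ => cyclicT_iterate_eq_id f hh hstab hconj,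
    stab_and_conj_of_cyclicT_zero_iterate_two f hh⟩

/-- with `α(w) = (h(f w))⁻¹`, if `α(w) ∈ Stab(w)` and
`α(g•w) = g α(w) g⁻¹` then the duplicial operator `t_n` is cyclic
(`t_n^{n+1} = id` for every `n ≥ 1`); conversely (with `L` faithful) if
`t₁² = id` then both conditions hold. -/
theorem stmt17 (G N L : Type*) [Group G] [MulAction G L] [MulAction G N]
    [FaithfulSMul G L]
    (h : L → G) (hh : ∀ (g : G) (l : L), h (g • l) = g * h l) (f : N → L) :
    (((∀ w : N, (h (f w))⁻¹ • w = w)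
        ∧ (∀ (g : G) (w : N), (h (f (g • w)))⁻¹ = g * (h (f w))⁻¹ * g⁻¹)) →
      ∀ m : ℕ, (cyclicT G N L h f m)^[m + 2] = id)
    ∧ ((cyclicT G N L h f 0)^[2] = id →
      (∀ w : N, (h (f w))⁻¹ • w = w)
        ∧ (∀ (g : G) (w : N), (h (f (g • w)))⁻¹ = g * (h (f w))⁻¹ * g⁻¹)) :=
  stmt17_general G N L h hh f
end
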